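/- arXiv:2410.23525 — 4 statements merged into one kernel-verified Lean document; each statement's English description precedes it below -/
import Mathlib

section
/- With $U_{(k)} \sim \mathrm{Beta}(k, N_0+1-k)$ and $p_k$ the bootstrap weight probabilities defined by $p_k = \sum_{j=0}^{M-1}\binom{N_0}{j}[((k-1)/N_0)^j(1-(k-1)/N_0)^{N_0-j} - (k/N_0)^j(1-k/N_0)^{N_0-j}]$, the identity $\sum_{k=1}^{N_0} \mathrm{E}[U_{(k)}]\, p_k = \frac{1}{N_0+1}\sum_{k=1}^{N_0} \mathrm{P}(U_{(M)} \ge (k-1)/N_0)$ holds, where $\mathrm{E}[U_{(k)}] = k/(N_0+1)$. -/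
/-! Abel summation turns `∑ k (a (k-1) - a k)` into `∑ a (k-1) - N a N`, and the last term vanishes
because `a N = P(Bin(N, 1) < M) = 0` when `M ≤ N`. -/

open Finset

theorem sum_Icc_natCast_mul_sub_eq_sum_sub_mul {R : Type*} [CommRing R] (a : ℕ → R) (n : ℕ) :
    ∑ k ∈ Icc 1 n, (k : R) * (a (k - 1) - a k) = ∑ k ∈ Icc 1 n, a (k - 1) - n * a n := by
  induction n with
  | zero => simp
  | succ n ih =>
    rw [sum_Icc_succ_top n.succ_pos, sum_Icc_succ_top n.succ_pos, ih]
    push_cast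
    ring

theorem sum_range_choose_mul_div_self_pow_eq_zero {M N : ℕ} (hMN : M ≤ N) :
    ∑ j ∈ range M, (N.choose j : ℝ) * ((N : ℝ) / N) ^ j * (1 - (N : ℝ) / N) ^ (N - j) = 0 := by
  refine sum_eq_zero fun j hj => ?_
  have hj : j < N := (mem_range.mp hj).trans_le hMN
  rw [div_self (Nat.cast_ne_zero.mpr (by omega)), sub_self, zero_pow (by omega), mul_zero]

theorem stmt4_general (N0 M : ℕ) (hMN : M ≤ N0)
    (a : ℕ → ℝ) (p : ℕ → ℝ)
    (ha : ∀ k, a k = ∑ j ∈ range M, (N0.choose j : ℝ) * ((k : ℝ) / N0) ^ j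
        * (1 - (k : ℝ) / N0) ^ (N0 - j))
    (hp : ∀ k, 1 ≤ k → p k = a (k - 1) - a k) :
    ∑ k ∈ Icc 1 N0, ((k : ℝ) / (N0 + 1)) * p k
      = (1 / ((N0 : ℝ) + 1)) * ∑ k ∈ Icc 1 N0, a (k - 1) := by
  have haN : a N0 = 0 := (ha N0).trans (sum_range_choose_mul_div_self_pow_eq_zero hMN)
  calc ∑ k ∈ Icc 1 N0, ((k : ℝ) / (N0 + 1)) * p k
      = (1 / ((N0 : ℝ) + 1)) * ∑ k ∈ Icc 1 N0, (k : ℝ) * (a (k - 1) - a k) := by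
        rw [mul_sum]
        refine sum_congr rfl fun k hk => ?_
        rw [hp k (mem_Icc.mp hk).1]
        ring
    _ = (1 / ((N0 : ℝ) + 1)) * ∑ k ∈ Icc 1 N0, a (k - 1) := by
        rw [sum_Icc_natCast_mul_sub_eq_sum_sub_mul, haN, mul_zero, sub_zero]

/-- With `E[U₍k₎] = k/(N₀+1)`, `a k := P(U₍M₎ ≥ k/N₀) = ∑_{j<M} C(N₀,j)(k/N₀)ʲ(1-k/N₀)^{N₀-j}`
and `p k := a (k-1) - a k` the bootstrap weight probabilities, one has
`∑_{k=1}^{N₀} E[U₍k₎] p k = (N₀+1)⁻¹ ∑_{k=1}^{N₀} P(U₍M₎ ≥ (k-1)/N₀)`. -/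
theorem stmt4 (N0 M : ℕ) (hM : 1 ≤ M) (hMN : M ≤ N0)
    (a : ℕ → ℝ) (p : ℕ → ℝ)
    (ha : ∀ k, a k = ∑ j ∈ range M, (N0.choose j : ℝ) * ((k : ℝ) / N0) ^ j
        * (1 - (k : ℝ) / N0) ^ (N0 - j))
    (hp : ∀ k, 1 ≤ k → p k = a (k - 1) - a k) :
    ∑ k ∈ Icc 1 N0, ((k : ℝ) / (N0 + 1)) * p k
      = (1 / ((N0 : ℝ) + 1)) * ∑ k ∈ Icc 1 N0, a (k - 1) :=
  stmt4_general N0 M hMN a p ha hp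
end

section
/- (Bootstrap Slutsky) On a product probability space, suppose $Q_n$ and $R_n$ are random variables such that $\sup_{t}|\mathrm{P}_{W|O}(Q_n \le t) - F(t)| \to 0$ in $\mathrm{P}_O$-probability for a continuous CDF $F$, and $R_n = o_{\mathrm{P}_W}(1)$ in $\mathrm{P}_O$-probability. Then $\sup_t |\mathrm{P}_{W|O}(Q_n + R_n \le t) - F(t)| \to 0$ in $\mathrm{P}_O$-probability. -/
/-!
Where `|Rₙ| ≤ ε`, the event `{Qₙ + Rₙ ≤ t}` is squeezed between `{Qₙ ≤ t - ε}` and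
`{Qₙ ≤ t + ε}`. Hence, for each `ω_O`, the Kolmogorov distance from the conditional law of
`Qₙ + Rₙ` to `F` exceeds that of `Qₙ` by at most `P_{W|O}(|Rₙ| > ε)` plus the
`ε`-oscillation of `F`, and the latter is uniformly small because a continuous function with
finite limits at `±∞` is uniformly continuous. The event that the distance exceeds `δ` is thus
covered by the two events of the hypotheses at level `δ / 3`.
-/

open MeasureTheory Filter Set Topology Bornology

theorem Continuous.uniformContinuous_of_tendsto_atBot_atTop {f : ℝ → ℝ} (hf : Continuous f)
    {a b : ℝ} (ha : Tendsto f atBot (𝓝 a)) (hb : Tendsto f atTop (𝓝 b)) :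
    UniformContinuous f := by
  rw [Metric.uniformContinuous_iff]
  intro η hη
  obtain ⟨A, hA⟩ := eventually_atBot.1 (ha.eventually (Metric.ball_mem_nhds a (half_pos hη)))
  obtain ⟨B, hB⟩ := eventually_atTop.1 (hb.eventually (Metric.ball_mem_nhds b (half_pos hη)))
  obtain ⟨δ, hδ, hK⟩ := Metric.uniformContinuousOn_iff.1
    ((isCompact_Icc (a := A - 1) (b := B + 1)).uniformContinuousOn_of_continuous
      hf.continuousOn) η hη
  refine ⟨min δ 1, by positivity, fun {x y} hxy => ?_⟩
  have hxy' : |x - y| < 1 := by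
    rw [← Real.dist_eq]
    exact hxy.trans_le (min_le_right _ _)
  by_cases hlow : x ≤ A ∧ y ≤ A
  · calc dist (f x) (f y) ≤ dist (f x) a + dist (f y) a := dist_triangle_right _ _ _
      _ < η / 2 + η / 2 := add_lt_add (hA x hlow.1) (hA y hlow.2)
      _ = η := add_halves η
  by_cases hhigh : B ≤ x ∧ B ≤ y
  · calc dist (f x) (f y) ≤ dist (f x) b + dist (f y) b := dist_triangle_right _ _ _
      _ < η / 2 + η / 2 := add_lt_add (hB x hhigh.1) (hB y hhigh.2)
      _ = η := add_halves η
  -- Being less than `1` apart and not both in one tail, `x` and `y` lie in `[A - 1, B + 1]`.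
  rw [not_and_or, not_le, not_le] at hlow hhigh
  obtain ⟨hx₁, hx₂⟩ := abs_sub_lt_iff.1 hxy'
  exact hK x ⟨by rcases hlow with h | h <;> linarith, by rcases hhigh with h | h <;> linarith⟩
    y ⟨by rcases hlow with h | h <;> linarith, by rcases hhigh with h | h <;> linarith⟩
    (hxy.trans_le (min_le_left _ _))

theorem UniformContinuous.exists_pos_forall_abs_sub_le {f : ℝ → ℝ} (hf : UniformContinuous f)
    {η : ℝ} (hη : 0 < η) : ∃ ε > 0, ∀ s t, |s - t| ≤ ε → |f s - f t| ≤ η := by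
  obtain ⟨δ, hδ, hf⟩ := Metric.uniformContinuous_iff.1 hf η hη
  refine ⟨δ / 2, half_pos hδ, fun s t hst => (hf ?_).le⟩
  rw [Real.dist_eq]
  linarith

noncomputable def kolmogorovDist {Ω : Type*} [MeasurableSpace Ω] (μ : Measure Ω)
    (X : Ω → ℝ) (F : ℝ → ℝ) : ℝ :=
  ⨆ t, |μ.real {ω | X ω ≤ t} - F t|

section Slutsky

variable {Ω : Type*} [MeasurableSpace Ω] {μ : Measure Ω} {X Y : Ω → ℝ}

lemma measureReal_add_le_le [IsFiniteMeasure μ] (ε t : ℝ) :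
    μ.real {ω | X ω + Y ω ≤ t} ≤ μ.real {ω | X ω ≤ t + ε} + μ.real {ω | ε < |Y ω|} := by
  refine (measureReal_mono fun ω (hω : X ω + Y ω ≤ t) => ?_).trans
    (measureReal_union_le _ _)
  by_contra! h
  simp only [mem_union, mem_ofPred_eq, not_or, not_le, not_lt] at h
  linarith [neg_abs_le (Y ω)]

lemma measureReal_le_sub_le [IsFiniteMeasure μ] (ε t : ℝ) :
    μ.real {ω | X ω ≤ t - ε} ≤ μ.real {ω | X ω + Y ω ≤ t} + μ.real {ω | ε < |Y ω|} := by
  refine (measureReal_mono fun ω (hω : X ω ≤ t - ε) => ?_).trans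
    (measureReal_union_le _ _)
  by_contra! h
  simp only [mem_union, mem_ofPred_eq, not_or, not_le, not_lt] at h
  linarith [le_abs_self (Y ω)]

variable {F : ℝ → ℝ}

lemma abs_measureReal_le_sub_le_kolmogorovDist [IsProbabilityMeasure μ]
    (hF : IsBounded (range F)) (t : ℝ) : |μ.real {ω | X ω ≤ t} - F t| ≤ kolmogorovDist μ X F := by
  obtain ⟨C, hC⟩ := isBounded_iff_forall_norm_le.1 hF
  refine le_ciSup (f := fun s => |μ.real {ω | X ω ≤ s} - F s|) ⟨1 + C, ?_⟩ t
  rintro _ ⟨s, rfl⟩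
  have hFs : |F s| ≤ C := hC _ ⟨s, rfl⟩
  calc |μ.real {ω | X ω ≤ s} - F s| ≤ |μ.real {ω | X ω ≤ s}| + |F s| := abs_sub _ _
    _ ≤ 1 + C := by
      rw [abs_of_nonneg measureReal_nonneg]
      exact add_le_add measureReal_le_one hFs

lemma kolmogorovDist_add_le [IsProbabilityMeasure μ] (hF : IsBounded (range F)) {ε η : ℝ}
    (hε : 0 ≤ ε) (hFε : ∀ s t, |s - t| ≤ ε → |F s - F t| ≤ η) :
    kolmogorovDist μ (fun ω => X ω + Y ω) F ≤
      kolmogorovDist μ X F + μ.real {ω | ε < |Y ω|} + η := by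
  refine ciSup_le fun t => abs_le.2 ⟨?_, ?_⟩
  · have hX := abs_le.1 (abs_measureReal_le_sub_le_kolmogorovDist (μ := μ) (X := X) hF (t - ε))
    have hFt := abs_le.1 (hFε (t - ε) t (by simp [abs_of_nonneg hε]))
    linarith [measureReal_le_sub_le (μ := μ) (X := X) (Y := Y) ε t]
  · have hX := abs_le.1 (abs_measureReal_le_sub_le_kolmogorovDist (μ := μ) (X := X) hF (t + ε))
    have hFt := abs_le.1 (hFε (t + ε) t (by simp [abs_of_nonneg hε]))
    linarith [measureReal_add_le_le (μ := μ) (X := X) (Y := Y) ε t]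

end Slutsky

theorem stmt15_general {ΩO ΩW : Type*} [MeasurableSpace ΩO] [MeasurableSpace ΩW]
    (μO : Measure ΩO) (μW : Measure ΩW)
    [IsProbabilityMeasure μW]
    (Q R : ℕ → ΩO × ΩW → ℝ)
    (F : ℝ → ℝ) (hFc : Continuous F)
    (hF0 : Tendsto F atBot (nhds 0)) (hF1 : Tendsto F atTop (nhds 1))
    (hQ : ∀ δ : ℝ, 0 < δ →
      Tendsto (fun n => μO {ωO |
        δ < ⨆ t : ℝ, |(μW {ωW | Q n (ωO, ωW) ≤ t}).toReal - F t|}) atTop (nhds 0))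
    (hR : ∀ ε δ : ℝ, 0 < ε → 0 < δ →
      Tendsto (fun n => μO {ωO |
        δ < (μW {ωW | ε < |R n (ωO, ωW)|}).toReal}) atTop (nhds 0)) :
    ∀ δ : ℝ, 0 < δ →
      Tendsto (fun n => μO {ωO |
        δ < ⨆ t : ℝ, |(μW {ωW | Q n (ωO, ωW) + R n (ωO, ωW) ≤ t}).toReal - F t|})
        atTop (nhds 0) := by
  intro δ hδ
  have hFb : IsBounded (range F) :=
    hFc.isBounded_range_iff_isBigO_atTop_atBot.2 ⟨hF1.isBigO_one ℝ, hF0.isBigO_one ℝ⟩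
  obtain ⟨ε, hε, hFε⟩ := (hFc.uniformContinuous_of_tendsto_atBot_atTop hF0 hF1)
    |>.exists_pos_forall_abs_sub_le (by positivity : 0 < δ / 3)
  have hsplit : ∀ n,
      {ωO | δ < kolmogorovDist μW (fun ωW => Q n (ωO, ωW) + R n (ωO, ωW)) F} ⊆
      {ωO | δ / 3 < kolmogorovDist μW (fun ωW => Q n (ωO, ωW)) F} ∪
        {ωO | δ / 3 < μW.real {ωW | ε < |R n (ωO, ωW)|}} := by
    intro n ωO (hω : δ < _)
    by_contra! h
    simp only [mem_union, mem_ofPred_eq, not_or, not_lt] at h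
    linarith [kolmogorovDist_add_le hFb hε.le hFε (μ := μW) (X := fun ωW => Q n (ωO, ωW))
      (Y := fun ωW => R n (ωO, ωW))]
  have hsum := (hQ (δ / 3) (by positivity)).add (hR ε (δ / 3) hε (by positivity))
  rw [add_zero] at hsum
  exact tendsto_of_tendsto_of_tendsto_of_le_of_le tendsto_const_nhds hsum (fun _ => zero_le)
    fun n => (measure_mono (hsplit n)).trans (measure_union_le _ _)

/-- Bootstrap Slutsky: if the conditional bootstrap distribution of `Qₙ`
converges uniformly to a continuous CDF `F` in `P_O`-probability, and `Rₙ = o_{P_W}(1)` in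
`P_O`-probability, then the conditional distribution of `Qₙ + Rₙ` also converges uniformly
to `F` in `P_O`-probability. -/
theorem stmt15 {ΩO ΩW : Type*} [MeasurableSpace ΩO] [MeasurableSpace ΩW]
    (μO : Measure ΩO) (μW : Measure ΩW)
    [IsProbabilityMeasure μO] [IsProbabilityMeasure μW]
    (Q R : ℕ → ΩO × ΩW → ℝ) (hQm : ∀ n, Measurable (Q n)) (hRm : ∀ n, Measurable (R n))
    (F : ℝ → ℝ) (hFc : Continuous F) (hFmono : Monotone F)
    (hF0 : Tendsto F atBot (nhds 0)) (hF1 : Tendsto F atTop (nhds 1))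
    (hQ : ∀ δ : ℝ, 0 < δ →
      Tendsto (fun n => μO {ωO |
        δ < ⨆ t : ℝ, |(μW {ωW | Q n (ωO, ωW) ≤ t}).toReal - F t|}) atTop (nhds 0))
    (hR : ∀ ε δ : ℝ, 0 < ε → 0 < δ →
      Tendsto (fun n => μO {ωO |
        δ < (μW {ωW | ε < |R n (ωO, ωW)|}).toReal}) atTop (nhds 0)) :
    ∀ δ : ℝ, 0 < δ →
      Tendsto (fun n => μO {ωO |
        δ < ⨆ t : ℝ, |(μW {ωW | Q n (ωO, ωW) + R n (ωO, ωW) ≤ t}).toReal - F t|})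
        atTop (nhds 0) :=
  stmt15_general μO μW Q R F hFc hF0 hF1 hQ hR
end

section
/- (Marcinkiewicz–Zygmund SLLN, case $0<p<1$) Let $\{X_i\}$ be i.i.d. real random variables with $\mathrm{E}[|X_1|^p] < \infty$ for some $0 < p < 1$. Then $S_n / n^{1/p} \to 0$ almost surely, where $S_n = \sum_{i=1}^n X_i$. -/
/-! Truncate at a level `K`. The terms with `|X i| ≤ K` contribute at most `n K = o(n ^ (1 / p))`
to `|S n|`. Since `p ≤ 1`, the remaining terms satisfy `(∑ |X i|) ^ p ≤ ∑ |X i| ^ p`, and by the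
strong law the average of `|X i| ^ p 1{|X i| > K}` converges a.s. to `E[|X 0| ^ p; |X 0| > K]`,
which is small for `K` large. -/

open MeasureTheory Filter Finset ProbabilityTheory Topology

lemma Real.rpow_sum_le_sum_rpow {ι : Type*} {p : ℝ} (hp0 : 0 < p) (hp1 : p ≤ 1)
    (s : Finset ι) (f : ι → ℝ) (hf : ∀ i ∈ s, 0 ≤ f i) :
    (∑ i ∈ s, f i) ^ p ≤ ∑ i ∈ s, f i ^ p :=
  Finset.le_sum_of_subadditive_on_pred (· ^ p) (0 ≤ ·) (Real.zero_rpow hp0.ne').le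
    (fun _ _ hx hy => Real.rpow_add_le_add_rpow hx hy hp0.le hp1)
    (fun _ _ => add_nonneg) f hf

noncomputable def tailRpow (p K x : ℝ) : ℝ := if K < |x| then |x| ^ p else 0

lemma tailRpow_nonneg (p K x : ℝ) : 0 ≤ tailRpow p K x := by
  unfold tailRpow
  split_ifs
  exacts [Real.rpow_nonneg (abs_nonneg x) p, le_rfl]

lemma norm_tailRpow_le (p K x : ℝ) : ‖tailRpow p K x‖ ≤ |x| ^ p := by
  rw [Real.norm_eq_abs, abs_of_nonneg (tailRpow_nonneg p K x), tailRpow]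
  split_ifs
  exacts [le_rfl, Real.rpow_nonneg (abs_nonneg x) p]

lemma tailRpow_eq_zero_of_abs_le {p K x : ℝ} (h : |x| ≤ K) : tailRpow p K x = 0 :=
  if_neg h.not_gt

lemma measurable_tailRpow (p K : ℝ) : Measurable (tailRpow p K) :=
  Measurable.ite (measurableSet_lt measurable_const measurable_abs)
    (measurable_abs.pow_const p) measurable_const

lemma abs_sum_le_card_mul_add_rpow_sum_tailRpow {ι : Type*} {p K : ℝ} (hp0 : 0 < p)
    (hp1 : p ≤ 1) (hK : 0 ≤ K) (s : Finset ι) (x : ι → ℝ) :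
    |∑ i ∈ s, x i| ≤ #s * K + (∑ i ∈ s, tailRpow p K (x i)) ^ (1 / p) := by
  set y : ι → ℝ := fun i => if K < |x i| then |x i| else 0
  have hy : ∀ i, 0 ≤ y i := fun i => by positivity
  have hy_rpow : ∀ i, y i ^ p = tailRpow p K (x i) := fun i => by
    simp only [y, tailRpow]
    split_ifs
    exacts [rfl, Real.zero_rpow hp0.ne']
  have hx_le : ∀ i, |x i| ≤ K + y i := fun i => by
    simp only [y]
    split_ifs with h
    · linarith
    · linarith [not_lt.1 h]
  have hsum_y : ∑ i ∈ s, y i ≤ (∑ i ∈ s, tailRpow p K (x i)) ^ (1 / p) := by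
    have hsum_y_nonneg := Finset.sum_nonneg fun i (_ : i ∈ s) => hy i
    calc ∑ i ∈ s, y i = ((∑ i ∈ s, y i) ^ p) ^ (1 / p) := by
          rw [← Real.rpow_mul hsum_y_nonneg, mul_one_div_cancel hp0.ne', Real.rpow_one]
      _ ≤ (∑ i ∈ s, tailRpow p K (x i)) ^ (1 / p) := by
          gcongr
          simpa only [hy_rpow] using Real.rpow_sum_le_sum_rpow hp0 hp1 s y fun i _ => hy i
  calc |∑ i ∈ s, x i| ≤ ∑ i ∈ s, (K + y i) :=
        (Finset.abs_sum_le_sum_abs _ _).trans (Finset.sum_le_sum fun i _ => hx_le i)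
    _ ≤ #s * K + (∑ i ∈ s, tailRpow p K (x i)) ^ (1 / p) := by
        rw [Finset.sum_add_distrib, Finset.sum_const, nsmul_eq_mul]
        gcongr

lemma tendsto_natCast_div_rpow_one_div_atTop {p : ℝ} (hp0 : 0 < p) (hp1 : p < 1) :
    Tendsto (fun n : ℕ => (n : ℝ) / (n : ℝ) ^ (1 / p)) atTop (𝓝 0) := by
  have hexp : 0 < 1 / p - 1 := sub_pos.2 ((one_lt_div hp0).2 hp1)
  refine ((tendsto_rpow_neg_atTop hexp).comp tendsto_natCast_atTop_atTop).congr' ?_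
  filter_upwards [eventually_gt_atTop 0] with n hn
  rw [Function.comp_apply, neg_sub, Real.rpow_sub (Nat.cast_pos.2 hn), Real.rpow_one]

lemma tendsto_sum_div_rpow_of_tendsto_avg_tailRpow {p : ℝ} (hp0 : 0 < p) (hp1 : p < 1)
    {x : ℕ → ℝ} {I : ℕ → ℝ} (hI : Tendsto I atTop (𝓝 0))
    (havg : ∀ K : ℕ, Tendsto (fun n : ℕ => (∑ i ∈ range n, tailRpow p K (x i)) / n) atTop
      (𝓝 (I K))) :
    Tendsto (fun n : ℕ => (∑ i ∈ range n, x i) / (n : ℝ) ^ (1 / p)) atTop (𝓝 0) := by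
  have hp : 0 < 1 / p := one_div_pos.2 hp0
  have hrpow : ∀ a, ContinuousAt (· ^ (1 / p)) a := fun a =>
    Real.continuousAt_rpow_const a _ (Or.inr hp.le)
  have hI_rpow : Tendsto (fun K => I K ^ (1 / p)) atTop (𝓝 0) :=
    Real.zero_rpow hp.ne' ▸ (hrpow 0).tendsto.comp hI
  rw [NormedAddGroup.tendsto_nhds_zero]
  intro ε hε
  obtain ⟨K, hK⟩ := (hI_rpow.eventually_lt_const hε).exists
  set T : ℕ → ℝ := fun n => ∑ i ∈ range n, tailRpow p K (x i)
  have hbound : Tendsto (fun n : ℕ => K * ((n : ℝ) / (n : ℝ) ^ (1 / p)) + (T n / n) ^ (1 / p))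
      atTop (𝓝 (K * 0 + I K ^ (1 / p))) :=
    ((tendsto_natCast_div_rpow_one_div_atTop hp0 hp1).const_mul _).add
      ((hrpow _).tendsto.comp (havg K))
  filter_upwards [hbound.eventually_lt_const (by simpa using hK), eventually_gt_atTop 0]
    with n hn hn0
  have hn0' : (0 : ℝ) < n := Nat.cast_pos.2 hn0
  have hT : 0 ≤ T n := Finset.sum_nonneg fun i _ => tailRpow_nonneg p K (x i)
  refine lt_of_le_of_lt ?_ hn
  calc ‖(∑ i ∈ range n, x i) / (n : ℝ) ^ (1 / p)‖
      = |∑ i ∈ range n, x i| / (n : ℝ) ^ (1 / p) := by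
        rw [Real.norm_eq_abs, abs_div, abs_of_pos (Real.rpow_pos_of_pos hn0' _)]
    _ ≤ (n * K + T n ^ (1 / p)) / (n : ℝ) ^ (1 / p) := by
        gcongr
        simpa using abs_sum_le_card_mul_add_rpow_sum_tailRpow hp0 hp1.le K.cast_nonneg
          (range n) x
    _ = K * ((n : ℝ) / (n : ℝ) ^ (1 / p)) + (T n / n) ^ (1 / p) := by
        rw [add_div, Real.div_rpow hT hn0'.le]
        ring

lemma tendsto_integral_tailRpow {Ω : Type*} [MeasurableSpace Ω] {μ : Measure Ω} {p : ℝ}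
    {Y : Ω → ℝ} (hY : Measurable Y) (hint : Integrable (fun ω => |Y ω| ^ p) μ) :
    Tendsto (fun K : ℕ => ∫ ω, tailRpow p K (Y ω) ∂μ) atTop (𝓝 0) := by
  have hlim : ∀ ω, Tendsto (fun K : ℕ => tailRpow p K (Y ω)) atTop (𝓝 0) := fun ω =>
    tendsto_const_nhds.congr' <| (tendsto_natCast_atTop_atTop.eventually_ge_atTop |Y ω|).mono
      fun K hK => (tailRpow_eq_zero_of_abs_le hK).symm
  simpa using tendsto_integral_of_dominated_convergence _
    (fun K => ((measurable_tailRpow p K).comp hY).aestronglyMeasurable) hint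
    (fun K => ae_of_all _ fun ω => norm_tailRpow_le p K (Y ω))
    (ae_of_all _ hlim)

theorem stmt16_general {Ω : Type*} [MeasurableSpace Ω] (μ : Measure Ω)
    (p : ℝ) (hp0 : 0 < p) (hp1 : p < 1)
    (X : ℕ → Ω → ℝ) (hmeas : ∀ i, Measurable (X i))
    (hindep : ProbabilityTheory.iIndepFun X μ)
    (hident : ∀ i, μ.map (X i) = μ.map (X 0))
    (hmom : ∫⁻ ω, ENNReal.ofReal (|X 0 ω| ^ p) ∂μ < ⊤) :
    ∀ᵐ ω ∂μ, Tendsto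
      (fun n => (∑ i ∈ range n, X i ω) / (n : ℝ) ^ (1 / p)) atTop (nhds 0) := by
  have hint : Integrable (fun ω => |X 0 ω| ^ p) μ :=
    ⟨(measurable_abs.pow_const p).comp (hmeas 0) |>.aestronglyMeasurable,
      (hasFiniteIntegral_iff_ofReal (ae_of_all _ fun ω => by positivity)).2 hmom⟩
  have hslln : ∀ᵐ ω ∂μ, ∀ K : ℕ, Tendsto
      (fun n : ℕ => (∑ i ∈ range n, tailRpow p K (X i ω)) / n) atTop
      (𝓝 (∫ ω, tailRpow p K (X 0 ω) ∂μ)) :=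
    ae_all_iff.2 fun K => strong_law_ae_real (fun i => tailRpow p K ∘ X i)
      (hint.mono' ((measurable_tailRpow p K).comp (hmeas 0)).aestronglyMeasurable
        (ae_of_all _ fun ω => norm_tailRpow_le p K (X 0 ω)))
      (fun i j hij => (hindep.comp _ fun _ => measurable_tailRpow p K).indepFun hij)
      (fun i => IdentDistrib.comp ⟨(hmeas i).aemeasurable, (hmeas 0).aemeasurable, hident i⟩
        (measurable_tailRpow p K))
  filter_upwards [hslln] with ω hω
  exact tendsto_sum_div_rpow_of_tendsto_avg_tailRpow hp0 hp1
    (tendsto_integral_tailRpow (hmeas 0) hint) hω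

/-- Marcinkiewicz–Zygmund SLLN, case `0 < p < 1`: if `{Xᵢ}` are i.i.d. with
`E[|X₁|^p] < ∞` for some `0 < p < 1`, then `Sₙ / n^{1/p} → 0` almost surely. -/
theorem stmt16 {Ω : Type*} [MeasurableSpace Ω] (μ : Measure Ω) [IsProbabilityMeasure μ]
    (p : ℝ) (hp0 : 0 < p) (hp1 : p < 1)
    (X : ℕ → Ω → ℝ) (hmeas : ∀ i, Measurable (X i))
    (hindep : ProbabilityTheory.iIndepFun X μ)
    (hident : ∀ i, μ.map (X i) = μ.map (X 0))
    (hmom : ∫⁻ ω, ENNReal.ofReal (|X 0 ω| ^ p) ∂μ < ⊤) :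
    ∀ᵐ ω ∂μ, Tendsto
      (fun n => (∑ i ∈ range n, X i ω) / (n : ℝ) ^ (1 / p)) atTop (nhds 0) :=
  stmt16_general μ p hp0 hp1 X hmeas hindep hident hmom
end

section
/- For positive integers $M \le N_0$ and real $\xi > 0$, setting $K = \lceil (1+\xi)M \rceil$, the upper tail probability satisfies $\mathrm{P}(U_{(M)} > K/N_0) \le \exp\Big\{ \frac{-\xi M}{\frac{3}{\xi}\big[\frac{N_0}{N_0+1}(1 - \frac{M}{N_0+1})\big] + 3} \Big\}$, where $U_{(M)}$ is the $M$-th order statistic of $N_0$ i.i.d. uniform $[0,1]$ random variables. -/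
/-!
With `p = K / N₀`, the event `U₍M₎ > p` says that fewer than `M` of the `U i` fall in `[0, p]`:
the Binomial(`N₀`, `p`) count lies at least `λ = K - M + 1` below its mean `K`. The Chernoff
bound at `-t`, with Bennett's estimate of the Bernoulli moment generating function and
`exp t - 1 - t ≤ t² / (2 (1 - t / 3))`, gives Bernstein's bound
`exp (-λ² / (2 (K (1 - p) + λ / 3)))`. Since `λ ≥ ξ M + 1` and
`2 (1 - K / N₀) ≤ 3 (N₀ / (N₀ + 1)) (1 - M / (N₀ + 1))`, its exponent is below the stated one.
When `K ≥ N₀` the event is null because `U₍M₎ ≤ 1` almost surely.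
-/

open MeasureTheory ProbabilityTheory Real Finset
open scoped Nat

namespace Real

lemma tsum_pow_div_factorial_add_two (x : ℝ) :
    ∑' n : ℕ, x ^ (n + 2) / (n + 2)! = exp x - 1 - x := by
  have h := (summable_pow_div_factorial x).sum_add_tsum_nat_add 2
  rw [exp_eq_exp_ℝ, NormedSpace.exp_eq_tsum_div]
  beta_reduce
  rw [← h]
  simp [Finset.sum_range_succ]
  ring

lemma summable_pow_div_factorial_add_two (x : ℝ) :
    Summable fun n : ℕ => x ^ (n + 2) / (n + 2)! :=
  (summable_nat_add_iff 2).mpr (summable_pow_div_factorial x)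

lemma exp_mul_le_of_abs_le_one {a t : ℝ} (ha : |a| ≤ 1) (ht : 0 ≤ t) :
    exp (a * t) ≤ 1 + a * t + a ^ 2 * (exp t - 1 - t) := by
  have hterm (n : ℕ) : (a * t) ^ (n + 2) / (n + 2)! ≤ a ^ 2 * (t ^ (n + 2) / (n + 2)!) := by
    rw [mul_div_assoc']
    gcongr
    calc (a * t) ^ (n + 2) ≤ |(a * t) ^ (n + 2)| := le_abs_self _
      _ = |a| ^ (n + 2) * t ^ (n + 2) := by rw [abs_pow, abs_mul, mul_pow, abs_of_nonneg ht]
      _ ≤ |a| ^ 2 * t ^ (n + 2) := by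
          have := pow_le_pow_of_le_one (abs_nonneg a) ha (show 2 ≤ n + 2 by omega)
          gcongr
      _ = a ^ 2 * t ^ (n + 2) := by rw [sq_abs]
  have h := Summable.tsum_le_tsum hterm (summable_pow_div_factorial_add_two _)
    ((summable_pow_div_factorial_add_two t).mul_left _)
  rw [tsum_pow_div_factorial_add_two, tsum_mul_left, tsum_pow_div_factorial_add_two] at h
  linarith

/-- The tail of the exponential series is dominated by a geometric series of ratio `t / 3`,
because `(n + 2)! ≥ 2 * 3 ^ n`. -/
lemma exp_sub_one_sub_le {t : ℝ} (h0 : 0 ≤ t) (h3 : t < 3) :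
    exp t - 1 - t ≤ t ^ 2 / (2 * (1 - t / 3)) := by
  have hterm (n : ℕ) : t ^ (n + 2) / (n + 2)! ≤ t ^ 2 / 2 * (t / 3) ^ n := by
    have hfact : (2 * 3 ^ n : ℝ) ≤ (n + 2)! := by
      have := Nat.factorial_mul_pow_le_factorial (m := 2) (n := n)
      rw [add_comm 2 n] at this
      exact_mod_cast this
    calc t ^ (n + 2) / (n + 2)! ≤ t ^ (n + 2) / (2 * 3 ^ n) := by gcongr
      _ = t ^ 2 / 2 * (t / 3) ^ n := by rw [div_pow, pow_add]; field_simp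
  have h := Summable.tsum_le_tsum hterm (summable_pow_div_factorial_add_two t)
    ((summable_geometric_of_lt_one (by positivity) (by linarith)).mul_left _)
  rw [tsum_pow_div_factorial_add_two, tsum_mul_left,
    tsum_geometric_of_lt_one (by positivity) (by linarith)] at h
  calc exp t - 1 - t ≤ t ^ 2 / 2 * (1 - t / 3)⁻¹ := h
    _ = t ^ 2 / (2 * (1 - t / 3)) := by field_simp

lemma one_sub_add_mul_exp_neg_le {p t : ℝ} (hp0 : 0 ≤ p) (hp1 : p ≤ 1) (ht : 0 ≤ t) :
    1 - p + p * exp (-t) ≤ exp (-(p * t) + p * (1 - p) * (exp t - 1 - t)) := by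
  set G := exp t - 1 - t
  have h1 : exp (p * t) ≤ 1 + p * t + p ^ 2 * G :=
    exp_mul_le_of_abs_le_one (abs_le.mpr ⟨by linarith, hp1⟩) ht
  have h2 : exp (-(1 - p) * t) ≤ 1 + -(1 - p) * t + (-(1 - p)) ^ 2 * G :=
    exp_mul_le_of_abs_le_one (abs_le.mpr ⟨by linarith, by linarith⟩) ht
  have hsplit : 1 - p + p * exp (-t) =
      exp (-(p * t)) * ((1 - p) * exp (p * t) + p * exp (-(1 - p) * t)) := by
    rw [mul_add, mul_left_comm, ← exp_add, mul_left_comm, ← exp_add,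
      show -(p * t) + p * t = 0 by ring, show -(p * t) + -(1 - p) * t = -t by ring, exp_zero]
    ring
  rw [hsplit, exp_add]
  gcongr
  calc (1 - p) * exp (p * t) + p * exp (-(1 - p) * t) ≤ 1 + p * (1 - p) * G := by
        nlinarith [mul_le_mul_of_nonneg_left h1 (sub_nonneg.mpr hp1),
          mul_le_mul_of_nonneg_left h2 hp0]
    _ ≤ exp (p * (1 - p) * G) := by linarith [add_one_le_exp (p * (1 - p) * G)]

end Real

/-- The exponent produced by the Chernoff bound at `t = λ / (A + λ / 3)`, which is where
`-t λ + A t² / (2 (1 - t / 3))` is minimal. -/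
lemma bernstein_exponent_eq {A lam : ℝ} (hA : 0 < A) (hlam : 0 < lam) :
    -(lam / (A + lam / 3) * lam) +
        A * ((lam / (A + lam / 3)) ^ 2 / (2 * (1 - lam / (A + lam / 3) / 3))) =
      -(lam ^ 2 / (2 * (A + lam / 3))) := by
  have h : 1 - lam / (A + lam / 3) / 3 = A / (A + lam / 3) := by field_simp; ring
  rw [h]
  field_simp
  ring

lemma two_mul_one_sub_div_le {M N : ℝ} (hM : 1 ≤ M) (hMN : M ≤ N) :
    2 * (1 - M / N) ≤ 3 * (N / (N + 1) * (1 - M / (N + 1))) := by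
  have hN : 0 < N := by linarith
  rw [show 1 - M / N = (N - M) / N by field_simp,
    show N / (N + 1) * (1 - M / (N + 1)) = N * (N + 1 - M) / (N + 1) ^ 2 by field_simp,
    mul_div_assoc', mul_div_assoc', div_le_div_iff₀ hN (by positivity)]
  nlinarith [mul_nonneg (mul_nonneg hN.le hN.le) (sub_nonneg.mpr hMN),
    mul_nonneg (mul_nonneg hN.le hN.le) (sub_nonneg.mpr hM)]

lemma div_le_bernstein_exponent {ξ M N K : ℝ} (hξ : 0 < ξ) (hM : 1 ≤ M) (hMN : M ≤ N)
    (hK : (1 + ξ) * M ≤ K) (hKN : K ≤ N) :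
    ξ * M / ((3 / ξ) * (N / (N + 1) * (1 - M / (N + 1))) + 3) ≤
      (K - M + 1) ^ 2 / (2 * (K * (1 - K / N) + (K - M + 1) / 3)) := by
  have hN : 0 < N := by linarith
  set c := N / (N + 1) * (1 - M / (N + 1))
  set lam := K - M + 1
  set A := K * (1 - K / N)
  have hc : 0 ≤ c :=
    mul_nonneg (by positivity) (by rw [sub_nonneg, div_le_one (by linarith)]; linarith)
  have hKN' : K / N ≤ 1 := (div_le_one hN).mpr hKN
  have hA : 0 ≤ A := mul_nonneg (by nlinarith) (by linarith)
  have hlam : ξ * M ≤ lam := by simp only [lam]; nlinarith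
  have hvar : 2 * (1 - K / N) ≤ 3 * c := by
    refine le_trans ?_ (two_mul_one_sub_div_le hM hMN)
    gcongr
    nlinarith
  -- Split `A = M (1 - K/N) + (K - M)(1 - K/N)`: the first part is controlled by `c`,
  -- the second by `λ`.
  have key : 2 * ξ * A ≤ lam * (3 * c + 2 * ξ) := by
    have h1 : 2 * ξ * (M * (1 - K / N)) ≤ lam * (3 * c) := by
      nlinarith [mul_le_mul_of_nonneg_left hvar (by positivity : (0 : ℝ) ≤ ξ * M)]
    have h2 : 2 * ξ * ((K - M) * (1 - K / N)) ≤ lam * (2 * ξ) := by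
      have hKM : 0 ≤ K - M := by nlinarith
      have : 0 ≤ K / N := div_nonneg (by nlinarith) hN.le
      nlinarith [mul_le_mul_of_nonneg_left this hKM]
    have hsplit : A = M * (1 - K / N) + (K - M) * (1 - K / N) := by ring
    rw [hsplit]
    linarith
  have hlam0 : 0 < lam := by nlinarith
  rw [show ξ * M / ((3 / ξ) * c + 3) = ξ ^ 2 * M / (3 * c + 3 * ξ) by field_simp,
    div_le_div_iff₀ (by positivity) (by positivity)]
  nlinarith [mul_le_mul hlam key (by positivity) hlam0.le,
    mul_le_mul_of_nonneg_left hlam (by positivity : (0 : ℝ) ≤ ξ * lam)]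

namespace ProbabilityTheory

lemma exp_mul_indicator_one {Ω : Type*} (E : Set Ω) (t : ℝ) :
    (fun ω => exp (t * E.indicator 1 ω)) = fun ω => E.indicator (fun _ => exp t - 1) ω + 1 := by
  ext ω
  by_cases hω : ω ∈ E <;> simp [hω]

variable {Ω ι : Type*} [MeasurableSpace Ω] {μ : Measure Ω} [IsProbabilityMeasure μ]

lemma integrable_exp_mul_indicator_one {E : Set Ω} (hE : MeasurableSet E) (t : ℝ) :
    Integrable (fun ω => exp (t * E.indicator 1 ω)) μ := by
  rw [exp_mul_indicator_one]
  exact ((integrable_const _).indicator hE).add (integrable_const 1)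

lemma mgf_indicator_one {E : Set Ω} (hE : MeasurableSet E) (t : ℝ) :
    mgf (E.indicator 1) μ t = 1 - μ.real E + μ.real E * exp t := by
  rw [mgf, exp_mul_indicator_one, integral_add ((integrable_const _).indicator hE)
    (integrable_const 1), integral_indicator_const _ hE]
  simp
  ring

lemma mgf_sum_indicator_neg_le [Fintype ι] {E : ι → Set Ω} (hE : ∀ i, MeasurableSet (E i))
    (hindep : iIndepFun (fun i => (E i).indicator (1 : Ω → ℝ)) μ) {p : ℝ}
    (hp : ∀ i, μ.real (E i) = p) {t : ℝ} (ht : 0 ≤ t) :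
    mgf (∑ i, (E i).indicator 1) μ (-t) ≤
      exp (Fintype.card ι * (-(p * t) + p * (1 - p) * (exp t - 1 - t))) := by
  rw [hindep.mgf_sum (fun i => measurable_one.indicator (hE i))]
  simp only [mgf_indicator_one (hE _), hp, prod_const, card_univ, exp_nat_mul]
  rcases isEmpty_or_nonempty ι with hι | ⟨⟨i⟩⟩
  · simp
  have hp0 : 0 ≤ p := hp i ▸ measureReal_nonneg
  have hp1 : p ≤ 1 := hp i ▸ measureReal_le_one
  gcongr
  exact one_sub_add_mul_exp_neg_le hp0 hp1 ht

/-- **Bernstein's inequality** for the lower tail of a binomial count. -/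
theorem measureReal_sum_indicator_le_sub_le [Fintype ι] [Nonempty ι] {E : ι → Set Ω}
    (hE : ∀ i, MeasurableSet (E i))
    (hindep : iIndepFun (fun i => (E i).indicator (1 : Ω → ℝ)) μ) {p : ℝ}
    (hp : ∀ i, μ.real (E i) = p) (hp0 : 0 < p) (hp1 : p < 1) {lam : ℝ} (hlam : 0 < lam) :
    μ.real {ω | ∑ i, (E i).indicator 1 ω ≤ Fintype.card ι * p - lam} ≤
      exp (-(lam ^ 2 / (2 * (Fintype.card ι * p * (1 - p) + lam / 3)))) := by
  set n : ℝ := (Fintype.card ι : ℝ)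
  set A := n * p * (1 - p)
  have hn : (0 : ℝ) < n := by positivity
  have hA : 0 < A := by positivity
  set t := lam / (A + lam / 3)
  have ht0 : 0 < t := by positivity
  have ht3 : t < 3 := by
    rw [div_lt_iff₀ (by positivity)]
    linarith
  have hint : Integrable (fun ω => exp (-t * (∑ i, (E i).indicator 1) ω)) μ :=
    hindep.integrable_exp_mul_sum (fun i => measurable_one.indicator (hE i))
      fun i _ => integrable_exp_mul_indicator_one (hE i) _
  calc μ.real {ω | ∑ i, (E i).indicator 1 ω ≤ n * p - lam}
      = μ.real {ω | (∑ i, (E i).indicator 1) ω ≤ n * p - lam} := by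
        simp only [Finset.sum_apply]
    _ ≤ exp (-(-t) * (n * p - lam)) * mgf (∑ i, (E i).indicator 1) μ (-t) :=
        measure_le_le_exp_mul_mgf _ (by linarith) hint
    _ ≤ exp (t * (n * p - lam)) * exp (n * (-(p * t) + p * (1 - p) * (exp t - 1 - t))) := by
        rw [neg_neg]
        gcongr
        exact mgf_sum_indicator_neg_le hE hindep hp ht0.le
    _ = exp (-(t * lam) + A * (exp t - 1 - t)) := by
        rw [← exp_add]; congr 1; simp only [A]; ring
    _ ≤ exp (-(t * lam) + A * (t ^ 2 / (2 * (1 - t / 3)))) := by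
        gcongr
        exact exp_sub_one_sub_le ht0.le ht3
    _ = exp (-(lam ^ 2 / (2 * (A + lam / 3)))) := by rw [bernstein_exponent_eq hA hlam]

end ProbabilityTheory

/-- The `M`-th order statistic of `x`; it is `0` when `M = 0` or `M > card ι`, where the set is
unbounded below or empty. -/
noncomputable def orderStat {ι : Type*} [Fintype ι] (M : ℕ) (x : ι → ℝ) : ℝ :=
  sInf {t : ℝ | M ≤ #{i | x i ≤ t}}

section OrderStat

variable {ι : Type*} [Fintype ι] {M : ℕ} {x : ι → ℝ} {t : ℝ}

lemma orderStat_le (ht : 0 ≤ t) (h : M ≤ #{i | x i ≤ t}) : orderStat M x ≤ t := by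
  by_cases hbdd : BddBelow {s : ℝ | M ≤ #{i | x i ≤ s}}
  · exact csInf_le hbdd h
  · rwa [orderStat, Real.sInf_of_not_bddBelow hbdd]

lemma card_lt_of_lt_orderStat (ht : 0 ≤ t) (h : t < orderStat M x) : #{i | x i ≤ t} < M := by
  by_contra! hM
  exact h.not_ge (orderStat_le ht hM)

lemma orderStat_le_one (hx : ∀ i, x i ∈ Set.Icc 0 1) (hM : M ≤ Fintype.card ι) :
    orderStat M x ≤ 1 :=
  orderStat_le zero_le_one (by rwa [filter_true_of_mem fun i _ => (hx i).2, card_univ])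

end OrderStat

lemma sum_indicator_preimage_Iic {Ω ι : Type*} [Fintype ι] (U : ι → Ω → ℝ) (p : ℝ) (ω : Ω) :
    ∑ i, (U i ⁻¹' Set.Iic p).indicator 1 ω = (#{i | U i ω ≤ p} : ℝ) := by
  classical
  simp [Set.indicator_apply]

lemma setOf_lt_orderStat_subset {Ω ι : Type*} [Fintype ι] {U : ι → Ω → ℝ} {M : ℕ} {p : ℝ}
    (hp : 0 ≤ p) :
    {ω | p < orderStat M fun i => U i ω} ⊆
      {ω | ∑ i, (U i ⁻¹' Set.Iic p).indicator (1 : Ω → ℝ) ω ≤ M - 1} := by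
  intro ω hω
  have hcard : (#{i | U i ω ≤ p} : ℝ) + 1 ≤ M := by
    exact_mod_cast card_lt_of_lt_orderStat hp hω
  rw [Set.mem_ofPred_eq, sum_indicator_preimage_Iic U]
  linarith

section Uniform

variable {Ω : Type*} [MeasurableSpace Ω] {μ : Measure Ω}

lemma iIndepFun_indicator_preimage_Iic {ι : Type*} {U : ι → Ω → ℝ} (hindep : iIndepFun U μ)
    (p : ℝ) : iIndepFun (fun i => (U i ⁻¹' Set.Iic p).indicator (1 : Ω → ℝ)) μ :=
  hindep.comp (fun _ => (Set.Iic p).indicator 1)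
    (fun _ => measurable_one.indicator measurableSet_Iic)

lemma ae_mem_of_map_eq_restrict {α : Type*} [MeasurableSpace α] {ν : Measure α} {s : Set α}
    {X : Ω → α} (hX : Measurable X) (hs : MeasurableSet s) (hlaw : μ.map X = ν.restrict s) :
    ∀ᵐ ω ∂μ, X ω ∈ s :=
  ae_of_ae_map hX.aemeasurable (hlaw ▸ ae_restrict_mem hs)

lemma measureReal_preimage_Iic_of_map_eq_uniform {X : Ω → ℝ} (hX : Measurable X)
    (hlaw : μ.map X = volume.restrict (Set.Icc 0 1)) {p : ℝ} (hp0 : 0 ≤ p) (hp1 : p ≤ 1) :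
    μ.real (X ⁻¹' Set.Iic p) = p := by
  rw [measureReal_def, ← Measure.map_apply hX measurableSet_Iic, hlaw,
    Measure.restrict_apply measurableSet_Iic, ← Set.Ici_inter_Iic, Set.inter_left_comm,
    Set.Iic_inter_Iic, min_eq_left hp1, Set.Ici_inter_Iic, Real.volume_Icc, sub_zero,
    ENNReal.toReal_ofReal hp0]

variable {ι : Type*} [Fintype ι] {U : ι → Ω → ℝ}

lemma measure_lt_orderStat_eq_zero (hmeas : ∀ i, Measurable (U i))
    (hlaw : ∀ i, μ.map (U i) = volume.restrict (Set.Icc (0 : ℝ) 1)) {M : ℕ}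
    (hM : M ≤ Fintype.card ι) {t : ℝ} (ht : 1 ≤ t) :
    μ {ω | t < orderStat M fun i => U i ω} = 0 := by
  rw [measure_eq_zero_iff_ae_notMem]
  filter_upwards [ae_all_iff.2 fun i =>
    ae_mem_of_map_eq_restrict (hmeas i) measurableSet_Icc (hlaw i)] with ω hω
  exact not_lt.2 ((orderStat_le_one hω hM).trans ht)

end Uniform

/-- Reiss-type tail bound for uniform order statistics: with
`K = ⌈(1+ξ)M⌉` and `U₍M₎` the `M`-th order statistic of `N₀` i.i.d. uniforms on `[0,1]`,
`P(U₍M₎ > K/N₀) ≤ exp{-ξM / ((3/ξ)[(N₀/(N₀+1))(1 - M/(N₀+1))] + 3)}`. -/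
theorem stmt17 {Ω : Type*} [MeasurableSpace Ω] (μ : Measure Ω) [IsProbabilityMeasure μ]
    (N0 M : ℕ) (hM : 1 ≤ M) (hMN : M ≤ N0) (ξ : ℝ) (hξ : 0 < ξ)
    (U : Fin N0 → Ω → ℝ) (hmeas : ∀ i, Measurable (U i))
    (hindep : ProbabilityTheory.iIndepFun U μ)
    (hlaw : ∀ i, μ.map (U i) = volume.restrict (Set.Icc (0 : ℝ) 1))
    (UM : Ω → ℝ)
    (hUM : ∀ ω, UM ω =
      sInf {t : ℝ | M ≤ (Finset.univ.filter (fun i => U i ω ≤ t)).card})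
    (K : ℕ) (hK : (K : ℝ) = ⌈(1 + ξ) * M⌉) :
    (μ {ω | (K : ℝ) / N0 < UM ω}).toReal ≤
      Real.exp ((-ξ * M) /
        ((3 / ξ) * (((N0 : ℝ) / (N0 + 1)) * (1 - (M : ℝ) / (N0 + 1))) + 3)) := by
  obtain rfl : UM = fun ω => orderStat M fun i => U i ω := funext hUM
  have hM' : (1 : ℝ) ≤ M := by exact_mod_cast hM
  have hMN' : (M : ℝ) ≤ N0 := by exact_mod_cast hMN
  have hKM : (1 + ξ) * M ≤ K := hK ▸ Int.le_ceil _
  have hN : (0 : ℝ) < N0 := by linarith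
  rcases le_or_gt N0 K with hKN | hKN
  · rw [measure_lt_orderStat_eq_zero hmeas hlaw (by simpa using hMN)
      ((one_le_div hN).2 (by exact_mod_cast hKN)), ENNReal.toReal_zero]
    positivity
  have : NeZero N0 := ⟨by omega⟩
  set p : ℝ := K / N0
  have hp0 : 0 < p := div_pos (by nlinarith) hN
  have hp1 : p < 1 := (div_lt_one hN).2 (by exact_mod_cast hKN)
  have hmean : Fintype.card (Fin N0) * p - (K - M + 1) = M - 1 := by
    rw [Fintype.card_fin, mul_div_cancel₀ _ hN.ne']; ring
  have hvar : Fintype.card (Fin N0) * p * (1 - p) = K * (1 - K / N0) := by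
    rw [Fintype.card_fin, mul_div_cancel₀ _ hN.ne']
  rw [← measureReal_def, neg_mul, neg_div]
  calc μ.real {ω | p < orderStat M fun i => U i ω}
      ≤ μ.real {ω | ∑ i, (U i ⁻¹' Set.Iic p).indicator (1 : Ω → ℝ) ω ≤ M - 1} :=
        measureReal_mono (setOf_lt_orderStat_subset hp0.le)
    _ ≤ exp (-((K - M + 1) ^ 2 / (2 * (K * (1 - K / N0) + (K - M + 1) / 3)))) := by
        rw [← hmean, ← hvar]
        exact measureReal_sum_indicator_le_sub_le (fun i => hmeas i measurableSet_Iic)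
          (iIndepFun_indicator_preimage_Iic hindep p)
          (fun i => measureReal_preimage_Iic_of_map_eq_uniform (hmeas i) (hlaw i) hp0.le hp1.le)
          hp0 hp1 (by nlinarith)
    _ ≤ _ := by
        rw [exp_le_exp, neg_le_neg_iff]
        exact div_le_bernstein_exponent hξ hM' hMN' hKM (by exact_mod_cast hKN.le)
end
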